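/- arXiv:2104.08743 — 3 statements merged into one kernel-verified Lean document; each statement's English description precedes it below -/
import Mathlib

section
/- Let G be a finite simple graph with vertex set V and let A_1, A_2 ⊆ V be attribute subsets. Then γ_{A_1}(G) = γ_{A_2}(G) (i.e., the relations ≡_{A_1} and ≡_{A_2} coincide) if and only if either (1) B_{A_1}(G) = B_{A_2}(G), or (2) each of B_{A_1}(G) and B_{A_2}(G) is either empty or equal to a single orbit of G. -/
/-- The orbit of a vertex `x` under the automorphism group of the graph `G`:
`O(x) = {φ(x) : φ an automorphism of G}`. -/
def orb {V : Type*} (G : SimpleGraph V) (x : V) : Set V :=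
  {y | ∃ φ : G ≃g G, φ x = y}

/-- The indiscernibility relation `x ≡_A y` iff `O(x) ∩ A = O(y) ∩ A`. -/
def Indis {V : Type*} (G : SimpleGraph V) (A : Set V) (x y : V) : Prop :=
  orb G x ∩ A = orb G y ∩ A

/-- The `≡_A`-equivalence class `O_A(x)` of a vertex `x`. -/
def eqCls {V : Type*} (G : SimpleGraph V) (A : Set V) (x : V) : Set V :=
  {y | Indis G A x y}

/-- `O(A) = ⋃_{a ∈ A} O(a)`. -/
def orbSet {V : Type*} (G : SimpleGraph V) (A : Set V) : Set V :=
  ⋃ a ∈ A, orb G a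

/-- Lower approximation `L_A(Q) = {x | O_A(x) ⊆ Q}`. -/
def lowerApprox {V : Type*} (G : SimpleGraph V) (A Q : Set V) : Set V :=
  {x | eqCls G A x ⊆ Q}

/-- Upper approximation `U_A(Q) = {x | O_A(x) ∩ Q ≠ ∅}`. -/
def upperApprox {V : Type*} (G : SimpleGraph V) (A Q : Set V) : Set V :=
  {x | (eqCls G A x ∩ Q).Nonempty}

/-!
The `≡_A`-classes are the orbits contained in `O(A)` together with `B_A(G)`, when it is nonempty,
because `x ≡_A y` holds exactly when `x` and `y` lie in a common orbit or both lie in `B_A(G)`.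
So the partition recovers `B_A(G)` as its unique class not contained in `O(A)`, except when
`B_A(G)` is empty or a single orbit, where the partition is just the orbit partition.
-/

section

variable {V : Type*} {G : SimpleGraph V}

lemma mem_orb_self (x : V) : x ∈ orb G x :=
  ⟨RelIso.refl _, rfl⟩

lemma mem_orb_symm {x y : V} (h : x ∈ orb G y) : y ∈ orb G x := by
  obtain ⟨φ, rfl⟩ := h
  exact ⟨φ.symm, φ.symm_apply_apply y⟩

lemma orb_eq_of_mem {x y : V} (h : x ∈ orb G y) : orb G x = orb G y := by
  obtain ⟨φ, rfl⟩ := h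
  ext z
  constructor
  · rintro ⟨ψ, rfl⟩
    exact ⟨φ.trans ψ, rfl⟩
  · rintro ⟨ψ, rfl⟩
    exact ⟨φ.symm.trans ψ, by simp⟩

lemma mem_orbSet_iff {A : Set V} {x : V} : x ∈ orbSet G A ↔ (orb G x ∩ A).Nonempty := by
  simp only [orbSet, Set.mem_iUnion]
  constructor
  · rintro ⟨a, ha, hx⟩
    exact ⟨a, mem_orb_symm hx, ha⟩
  · rintro ⟨a, hax, ha⟩
    exact ⟨a, ha, mem_orb_symm hax⟩

lemma mem_orbSet_congr {A : Set V} {x y : V} (h : x ∈ orb G y) :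
    x ∈ orbSet G A ↔ y ∈ orbSet G A := by
  rw [mem_orbSet_iff, mem_orbSet_iff, orb_eq_of_mem h]

lemma indis_iff {A : Set V} {x y : V} :
    Indis G A x y ↔ (x ∉ orbSet G A ∧ y ∉ orbSet G A) ∨ orb G x = orb G y := by
  simp only [Indis, mem_orbSet_iff, Set.not_nonempty_iff_eq_empty]
  constructor
  · intro h
    rcases (orb G x ∩ A).eq_empty_or_nonempty with hx | ⟨a, hax, haA⟩
    · exact Or.inl ⟨hx, h ▸ hx⟩
    · have hay : a ∈ orb G y ∩ A := h ▸ ⟨hax, haA⟩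
      exact Or.inr ((orb_eq_of_mem hax).symm.trans (orb_eq_of_mem hay.1))
  · rintro (⟨hx, hy⟩ | h)
    · rw [hx, hy]
    · rw [h]

lemma compl_orbSet_eq_orb_of_indis_iff {A₁ A₂ : Set V}
    (h : ∀ x y : V, Indis G A₁ x y ↔ Indis G A₂ x y) {x : V}
    (hx₁ : x ∉ orbSet G A₁) (hx₂ : x ∈ orbSet G A₂) : (orbSet G A₁)ᶜ = orb G x := by
  ext y
  constructor
  · intro hy
    rcases indis_iff.1 ((h x y).1 (indis_iff.2 (Or.inl ⟨hx₁, hy⟩))) with ⟨hx₂', -⟩ | hxy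
    · exact absurd hx₂ hx₂'
    · exact hxy ▸ mem_orb_self y
  · intro hy
    rwa [Set.mem_compl_iff, mem_orbSet_congr hy]

lemma compl_orbSet_eq_empty_or_orb_of_indis_iff {A₁ A₂ : Set V}
    (h : ∀ x y : V, Indis G A₁ x y ↔ Indis G A₂ x y)
    (hne : (orbSet G A₁)ᶜ ≠ (orbSet G A₂)ᶜ) :
    (orbSet G A₁)ᶜ = ∅ ∨ ∃ x : V, (orbSet G A₁)ᶜ = orb G x := by
  rcases (orbSet G A₁)ᶜ.eq_empty_or_nonempty with he | ⟨x, hx₁⟩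
  · exact Or.inl he
  right
  by_cases hx₂ : x ∈ orbSet G A₂
  · exact ⟨x, compl_orbSet_eq_orb_of_indis_iff h hx₁ hx₂⟩
  obtain ⟨z, hz⟩ : ∃ z, ¬(z ∈ orbSet G A₁ ↔ z ∈ orbSet G A₂) := by
    by_contra! hall
    exact hne (congrArg (·ᶜ) (Set.ext hall))
  by_cases hz₁ : z ∈ orbSet G A₁
  · -- Then `B_{A₂}(G)` is the orbit of `z` and contains `x`, so `z` would lie in `B_{A₁}(G)`.
    have hz₂ : z ∉ orbSet G A₂ := fun hz₂ => hz (iff_of_true hz₁ hz₂)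
    have hB₂ := compl_orbSet_eq_orb_of_indis_iff (fun x y => (h x y).symm) hz₂ hz₁
    have hxz : x ∈ orb G z := hB₂ ▸ hx₂
    exact absurd ((mem_orbSet_congr hxz).2 hz₁) hx₁
  · have hz₂ : z ∈ orbSet G A₂ := by tauto
    exact ⟨z, compl_orbSet_eq_orb_of_indis_iff h hz₁ hz₂⟩

lemma indis_iff_orb_eq {A : Set V}
    (hB : (orbSet G A)ᶜ = ∅ ∨ ∃ z : V, (orbSet G A)ᶜ = orb G z) (x y : V) :
    Indis G A x y ↔ orb G x = orb G y := by
  rw [indis_iff, or_iff_right_iff_imp]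
  rintro ⟨hx, hy⟩
  rw [← Set.mem_compl_iff] at hx hy
  rcases hB with he | ⟨z, hz⟩
  · exact absurd (he ▸ hx) (Set.notMem_empty x)
  · rw [hz] at hx hy
    exact (orb_eq_of_mem hx).trans (orb_eq_of_mem hy).symm

end

theorem stmt_2_general {V : Type*} (G : SimpleGraph V) (A₁ A₂ : Set V) :
    (∀ x y : V, Indis G A₁ x y ↔ Indis G A₂ x y) ↔
      ((orbSet G A₁)ᶜ = (orbSet G A₂)ᶜ ∨
        (((orbSet G A₁)ᶜ = ∅ ∨ ∃ x : V, (orbSet G A₁)ᶜ = orb G x) ∧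
         ((orbSet G A₂)ᶜ = ∅ ∨ ∃ x : V, (orbSet G A₂)ᶜ = orb G x))) := by
  constructor
  · intro h
    by_cases hB : (orbSet G A₁)ᶜ = (orbSet G A₂)ᶜ
    · exact Or.inl hB
    · exact Or.inr ⟨compl_orbSet_eq_empty_or_orb_of_indis_iff h hB,
        compl_orbSet_eq_empty_or_orb_of_indis_iff (fun x y => (h x y).symm) (Ne.symm hB)⟩
  · rintro (hB | ⟨h₁, h₂⟩) x y
    · rw [indis_iff, indis_iff, compl_inj_iff.1 hB]
    · rw [indis_iff_orb_eq h₁, indis_iff_orb_eq h₂]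

/-- `γ_{A₁}(G) = γ_{A₂}(G)` iff either `B_{A₁}(G) = B_{A₂}(G)`, or each of
`B_{A₁}(G)`, `B_{A₂}(G)` is empty or consists of a single orbit, where `B_A(G) = (O(A))ᶜ`. -/
theorem stmt_2 {V : Type*} [Fintype V] (G : SimpleGraph V) (A₁ A₂ : Set V) :
    (∀ x y : V, Indis G A₁ x y ↔ Indis G A₂ x y) ↔
      ((orbSet G A₁)ᶜ = (orbSet G A₂)ᶜ ∨
        (((orbSet G A₁)ᶜ = ∅ ∨ ∃ x : V, (orbSet G A₁)ᶜ = orb G x) ∧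
         ((orbSet G A₂)ᶜ = ∅ ∨ ∃ x : V, (orbSet G A₂)ᶜ = orb G x))) :=
  stmt_2_general G A₁ A₂
end

section
/- Let G = K_{m,n} be the complete bipartite graph with parts V₁ and V₂ of sizes m and n, where m ≠ n, and let V = V₁ ∪ V₂. Let A ⊆ V be a nonempty attribute subset and Q ⊆ V a nonempty subset. Then Q is A-rough (i.e., L_A(Q) ≠ U_A(Q)) if and only if Q ≠ V₁, Q ≠ V₂, and Q ≠ V. -/
/-- The complete bipartite graph `K_{m,n}` on `Fin m ⊕ Fin n`. -/
def Kmn (m n : ℕ) : SimpleGraph (Fin m ⊕ Fin n) :=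
  completeBipartiteGraph (Fin m) (Fin n)

/-- The first part `V₁` of `K_{m,n}`. -/
def V1 (m n : ℕ) : Set (Fin m ⊕ Fin n) := Set.range Sum.inl

/-- The second part `V₂` of `K_{m,n}`. -/
def V2 (m n : ℕ) : Set (Fin m ⊕ Fin n) := Set.range Sum.inr

-- swap iso on left part
def swapL (m n : ℕ) (i i' : Fin m) : Kmn m n ≃g Kmn m n where
  toEquiv := Equiv.sumCongr (Equiv.swap i i') (Equiv.refl _)
  map_rel_iff' := by intro a b; cases a <;> cases b <;> simp [Kmn, Equiv.swap_apply_def] <;> split_ifs <;> simp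

def swapR (m n : ℕ) (j j' : Fin n) : Kmn m n ≃g Kmn m n where
  toEquiv := Equiv.sumCongr (Equiv.refl _) (Equiv.swap j j')
  map_rel_iff' := by intro a b; cases a <;> cases b <;> simp [Kmn, Equiv.swap_apply_def] <;> split_ifs <;> simp

lemma key_inl (m n : ℕ) (hmn : m ≠ n) (φ : Kmn m n ≃g Kmn m n) (i : Fin m) :
    ∃ j, φ (Sum.inl i) = Sum.inl j := by
  by_contra h
  push_neg at h
  obtain ⟨j, hj⟩ : ∃ j, φ (Sum.inl i) = Sum.inr j := by
    rcases hφ : φ (Sum.inl i) with k | k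
    · exact absurd hφ (h k)
    · exact ⟨k, rfl⟩
  have h1 : ∀ k : Fin m, ∃ j', φ (Sum.inl k) = Sum.inr j' := by
    intro k
    rcases hφ : φ (Sum.inl k) with k' | k'
    swap
    · exact ⟨k', rfl⟩
    · by_cases hk : k = i
      · subst hk; rw [hφ] at hj; exact absurd hj (by simp)
      · exfalso
        have hadj : ¬ (Kmn m n).Adj (Sum.inl i) (Sum.inl k) := by simp [Kmn]
        have : (Kmn m n).Adj (φ (Sum.inl i)) (φ (Sum.inl k)) := by
          rw [hj, hφ]; simp [Kmn]
        rw [φ.map_adj_iff] at this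
        exact hadj this
  have h2 : ∀ k : Fin n, ∃ j', φ (Sum.inr k) = Sum.inl j' := by
    intro k
    rcases hφ : φ (Sum.inr k) with k' | k'
    · exact ⟨k', rfl⟩
    · exfalso
      have : (Kmn m n).Adj (φ (Sum.inl i)) (φ (Sum.inr k)) := by
        rw [φ.map_adj_iff]; simp [Kmn]
      rw [hj, hφ] at this; simp [Kmn] at this
  have hle1 : m ≤ n := by
    have : Function.Injective (fun k : Fin m => (h1 k).choose) := by
      intro a b hab
      have ha := (h1 a).choose_spec
      have hb := (h1 b).choose_spec
      have : φ (Sum.inl a) = φ (Sum.inl b) := by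
        rw [ha, hb]; exact congrArg Sum.inr hab
      simpa using φ.injective this
    simpa using Fintype.card_le_of_injective _ this
  have hle2 : n ≤ m := by
    have : Function.Injective (fun k : Fin n => (h2 k).choose) := by
      intro a b hab
      have ha := (h2 a).choose_spec
      have hb := (h2 b).choose_spec
      have : φ (Sum.inr a) = φ (Sum.inr b) := by
        rw [ha, hb]; exact congrArg Sum.inl hab
      simpa using φ.injective this
    simpa using Fintype.card_le_of_injective _ this
  omega

lemma key_inr (m n : ℕ) (hmn : m ≠ n) (φ : Kmn m n ≃g Kmn m n) (j : Fin n) :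
    ∃ i, φ (Sum.inr j) = Sum.inr i := by
  rcases hφ : φ (Sum.inr j) with k | k
  · exfalso
    obtain ⟨i', hi'⟩ := key_inl m n hmn φ.symm k
    have : φ.symm (φ (Sum.inr j)) = Sum.inl i' := by rw [hφ]; exact hi'
    simp at this
  · exact ⟨k, rfl⟩

lemma orb_inl (m n : ℕ) (hmn : m ≠ n) (i : Fin m) :
    orb (Kmn m n) (Sum.inl i) = V1 m n := by
  ext y
  constructor
  · rintro ⟨φ, rfl⟩
    obtain ⟨j, hj⟩ := key_inl m n hmn φ i
    exact ⟨j, hj.symm⟩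
  · rintro ⟨i', rfl⟩
    exact ⟨swapL m n i i', by simp [swapL]⟩

lemma orb_inr (m n : ℕ) (hmn : m ≠ n) (j : Fin n) :
    orb (Kmn m n) (Sum.inr j) = V2 m n := by
  ext y
  constructor
  · rintro ⟨φ, rfl⟩
    obtain ⟨i, hi⟩ := key_inr m n hmn φ j
    exact ⟨i, hi.symm⟩
  · rintro ⟨j', rfl⟩
    exact ⟨swapR m n j j', by simp [swapR]⟩

lemma parts_ne (m n : ℕ) (A : Set (Fin m ⊕ Fin n)) (hA : A.Nonempty) :
    V1 m n ∩ A ≠ V2 m n ∩ A := by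
  obtain ⟨a, ha⟩ := hA
  intro h
  rcases a with i | j
  · have h1 : Sum.inl i ∈ V1 m n ∩ A := ⟨⟨i, rfl⟩, ha⟩
    rw [h] at h1
    obtain ⟨⟨j, hj⟩, -⟩ := h1
    exact nomatch hj
  · have h1 : Sum.inr j ∈ V2 m n ∩ A := ⟨⟨j, rfl⟩, ha⟩
    rw [← h] at h1
    obtain ⟨⟨i, hi⟩, -⟩ := h1
    exact nomatch hi

lemma eqCls_inl (m n : ℕ) (hmn : m ≠ n) (A : Set (Fin m ⊕ Fin n)) (hA : A.Nonempty)
    (i : Fin m) : eqCls (Kmn m n) A (Sum.inl i) = V1 m n := by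
  ext y
  rcases y with i' | j'
  · simp [eqCls, Indis, orb_inl m n hmn, V1]
  · simp only [eqCls, Indis, Set.mem_setOf_eq, orb_inl m n hmn, orb_inr m n hmn]
    constructor
    · exact fun h => absurd h (parts_ne m n A hA)
    · rintro ⟨i'', hi''⟩; exact nomatch hi''

lemma eqCls_inr (m n : ℕ) (hmn : m ≠ n) (A : Set (Fin m ⊕ Fin n)) (hA : A.Nonempty)
    (j : Fin n) : eqCls (Kmn m n) A (Sum.inr j) = V2 m n := by
  ext y
  rcases y with i' | j'
  · simp only [eqCls, Indis, Set.mem_setOf_eq, orb_inl m n hmn, orb_inr m n hmn]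
    constructor
    · exact fun h => absurd h.symm (parts_ne m n A hA)
    · rintro ⟨j'', hj''⟩; exact nomatch hj''
  · simp [eqCls, Indis, orb_inr m n hmn, V2]


/-- in `K_{m,n}` with `m ≠ n`, for nonempty `A` and nonempty `Q`, `Q` is
`A`-rough (`L_A(Q) ≠ U_A(Q)`) iff `Q ≠ V₁`, `Q ≠ V₂` and `Q ≠ V`. -/
theorem stmt_10 (m n : ℕ) (hmn : m ≠ n) (A Q : Set (Fin m ⊕ Fin n))
    (hA : A.Nonempty) (hQ : Q.Nonempty) :
    lowerApprox (Kmn m n) A Q ≠ upperApprox (Kmn m n) A Q ↔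
      (Q ≠ V1 m n ∧ Q ≠ V2 m n ∧ Q ≠ Set.univ) := by
  have hcls : ∀ x : Fin m ⊕ Fin n,
      eqCls (Kmn m n) A x = Sum.elim (fun _ => V1 m n) (fun _ => V2 m n) x := by
    rintro (i | j)
    · exact eqCls_inl m n hmn A hA i
    · exact eqCls_inr m n hmn A hA j
  constructor
  · -- rough → Q ∉ {V1, V2, univ}; contrapositive
    intro hne
    refine ⟨?_, ?_, ?_⟩ <;> rintro rfl <;> apply hne <;> ext x <;>
      simp only [lowerApprox, upperApprox, Set.mem_setOf_eq, hcls] <;> rcases x with i | j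
    · simp only [Sum.elim_inl]
      constructor
      · intro h; exact ⟨Sum.inl i, ⟨i, rfl⟩, h ⟨i, rfl⟩⟩
      · rintro ⟨y, hy1, hy2⟩ z hz; exact hz
    · simp only [Sum.elim_inr]
      constructor
      · intro h; exact absurd (h ⟨j, rfl⟩) (by rintro ⟨i', h'⟩; exact nomatch h')
      · rintro ⟨y, ⟨j', rfl⟩, ⟨i', h'⟩⟩; exact nomatch h'
    · simp only [Sum.elim_inl]
      constructor
      · intro h; exact absurd (h ⟨i, rfl⟩) (by rintro ⟨j', h'⟩; exact nomatch h')
      · rintro ⟨y, ⟨i', rfl⟩, ⟨j', h'⟩⟩; exact nomatch h'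
    · simp only [Sum.elim_inr]
      constructor
      · intro h; exact ⟨Sum.inr j, ⟨j, rfl⟩, h ⟨j, rfl⟩⟩
      · rintro ⟨y, hy1, hy2⟩ z hz; exact hz
    · simp only [Sum.elim_inl]
      exact ⟨fun _ => ⟨Sum.inl i, ⟨i, rfl⟩, trivial⟩, fun _ _ _ => trivial⟩
    · simp only [Sum.elim_inr]
      exact ⟨fun _ => ⟨Sum.inr j, ⟨j, rfl⟩, trivial⟩, fun _ _ _ => trivial⟩
  · -- Q ∉ {V1, V2, univ} → rough
    rintro ⟨h1, h2, h3⟩ heq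
    -- find x with eqCls x ∩ Q nonempty but eqCls x ⊄ Q
    obtain ⟨q, hq⟩ := hQ
    have key : ∀ x : Fin m ⊕ Fin n, x ∈ Q →
        Sum.elim (fun _ => V1 m n) (fun _ => V2 m n) x ⊆ Q := by
      intro x hx
      have hmem : x ∈ Sum.elim (fun _ => V1 m n) (fun _ => V2 m n) x := by
        rcases x with i | j
        · exact ⟨i, rfl⟩
        · exact ⟨j, rfl⟩
      have hx' : x ∈ upperApprox (Kmn m n) A Q := ⟨x, by rw [hcls]; exact hmem, hx⟩
      rw [← heq] at hx'
      simp only [lowerApprox, Set.mem_setOf_eq, hcls] at hx'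
      exact hx'
    -- so Q is a union of full parts
    rcases q with i | j
    · have hV1 : V1 m n ⊆ Q := key _ hq
      have : ∃ y ∈ Q, y ∉ V1 m n := by
        by_contra hc
        push_neg at hc
        exact h1 (Set.Subset.antisymm hc hV1)
      obtain ⟨y, hy, hy'⟩ := this
      rcases y with i' | j'
      · exact hy' ⟨i', rfl⟩
      · have hV2 : V2 m n ⊆ Q := key _ hy
        apply h3
        ext z
        simp only [Set.mem_univ, iff_true]
        rcases z with i'' | j''
        · exact hV1 ⟨i'', rfl⟩
        · exact hV2 ⟨j'', rfl⟩
    · have hV2 : V2 m n ⊆ Q := key _ hq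
      have : ∃ y ∈ Q, y ∉ V2 m n := by
        by_contra hc
        push_neg at hc
        exact h2 (Set.Subset.antisymm hc hV2)
      obtain ⟨y, hy, hy'⟩ := this
      rcases y with i' | j'
      · have hV1 : V1 m n ⊆ Q := key _ hy
        apply h3
        ext z
        simp only [Set.mem_univ, iff_true]
        rcases z with i'' | j''
        · exact hV1 ⟨i'', rfl⟩
        · exact hV2 ⟨j'', rfl⟩
      · exact hy' ⟨j', rfl⟩
end

section
/- Let P_n be the path graph on vertices x_1, …, x_n with edges x_i x_{i+1} for 1 ≤ i ≤ n−1. Then: (i) ESS(P_n) = ∅ for n ≤ 4; (ii) for every k ≥ 2, |ESS_3(P_{2k+1})| = k and ESS_3(P_{2k}) = ∅; (iii) for every k ≥ 3, |ESS_4(P_{2k})| = k(k−1)/2. -/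
/-- A proper subset `S ⊊ V` is essential (w.r.t. the full attribute set `V`) if
`γ_{V∖S} ≠ γ_V` while `γ_{V∖Q} = γ_V` for every proper subset `Q ⊊ S`. -/
def Essential {V : Type*} (G : SimpleGraph V) (S : Set V) : Prop :=
  S ⊂ Set.univ ∧
  ¬ (∀ x y : V, Indis G Sᶜ x y ↔ Indis G Set.univ x y) ∧
  ∀ Q : Set V, Q ⊂ S → (∀ x y : V, Indis G Qᶜ x y ↔ Indis G Set.univ x y)

open SimpleGraph


def revIso (n : ℕ) : pathGraph n ≃g pathGraph n :=
  ⟨Fin.revPerm, by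
    intro u v
    simp only [pathGraph_adj, Fin.revPerm_apply, Fin.val_rev]
    omega⟩

lemma revIso_apply {n : ℕ} (x : Fin n) : revIso n x = x.rev := rfl

lemma aut_fix (n : ℕ) (φ : pathGraph n ≃g pathGraph n) (hn : 0 < n)
    (h0 : φ ⟨0, hn⟩ = ⟨0, hn⟩) : ∀ m (hm : m < n), φ ⟨m, hm⟩ = ⟨m, hm⟩ := by
  intro m
  induction m using Nat.strong_induction_on with
  | _ m ih =>
    intro hm
    match m, hm with
    | 0, hm => exact h0
    | (m+1), hm =>
      have hprev : φ ⟨m, by omega⟩ = ⟨m, by omega⟩ := ih m (by omega) (by omega)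
      have hadj : (pathGraph n).Adj (φ ⟨m+1, hm⟩) (φ ⟨m, by omega⟩) :=
        φ.map_adj_iff.mpr (by simp [pathGraph_adj])
      rw [hprev, pathGraph_adj] at hadj
      simp only [Fin.val_mk] at hadj
      rcases hadj with h | h
      · exfalso
        rcases Nat.eq_zero_or_pos m with hm0 | hmpos
        · omega
        · have hpp : φ ⟨m-1, by omega⟩ = ⟨m-1, by omega⟩ := ih (m-1) (by omega) (by omega)
          have heq : φ ⟨m+1, hm⟩ = φ ⟨m-1, by omega⟩ := by
            apply Fin.ext
            rw [hpp]
            simp only [Fin.val_mk]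
            omega
          have := φ.injective heq
          rw [Fin.mk.injEq] at this
          omega
      · apply Fin.ext
        simp only [Fin.val_mk]
        omega

lemma aut_zero {n : ℕ} (φ : pathGraph n ≃g pathGraph n) (hn : 2 ≤ n) :
    (φ ⟨0, by omega⟩).val = 0 ∨ (φ ⟨0, by omega⟩).val = n - 1 := by
  by_contra hc
  push_neg at hc
  obtain ⟨h1, h2⟩ := hc
  obtain ⟨v, hv⟩ : ∃ v, φ ⟨0, by omega⟩ = v := ⟨_, rfl⟩
  rw [hv] at h1 h2
  have hvlt : v.val < n := v.isLt
  have ha : (pathGraph n).Adj v ⟨v.val - 1, by omega⟩ := by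
    rw [pathGraph_adj]; simp only [Fin.val_mk]; omega
  have hb : (pathGraph n).Adj v ⟨v.val + 1, by have := v.isLt; omega⟩ := by
    rw [pathGraph_adj]; exact Or.inl rfl
  have key : ∀ w : Fin n, (pathGraph n).Adj v w → φ.symm w = ⟨1, by omega⟩ := by
    intro w hw
    have h3 : (pathGraph n).Adj (φ ⟨0, by omega⟩) (φ (φ.symm w)) := by
      rwa [RelIso.apply_symm_apply, hv]
    rw [φ.map_adj_iff, pathGraph_adj] at h3
    simp only [Fin.val_mk] at h3
    apply Fin.ext
    simp only [Fin.val_mk]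
    omega
  have e1 := key _ ha
  have e2 := key _ hb
  rw [← e2] at e1
  have := φ.symm.injective e1
  rw [Fin.mk.injEq] at this
  omega

lemma aut_apply {n : ℕ} (φ : pathGraph n ≃g pathGraph n) (x : Fin n) :
    φ x = x ∨ φ x = x.rev := by
  rcases Nat.lt_or_ge n 2 with hn | hn
  · left
    rcases Nat.eq_zero_or_pos n with h | h
    · exact absurd x.isLt (by omega)
    · have : Subsingleton (Fin n) := by
        interval_cases n
        infer_instance
      exact Subsingleton.elim _ _
  · have h0 : (φ ⟨0, by omega⟩).val = 0 ∨ (φ ⟨0, by omega⟩).val = n - 1 := aut_zero φ hn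
    rcases h0 with h0 | h0
    · left
      have := aut_fix n φ (by omega) (Fin.ext h0) x.val x.isLt
      simpa using this
    · right
      -- rev ∘ φ fixes 0
      have hψ : ∀ m (hm : m < n), ((revIso n).comp φ) ⟨m, hm⟩ = ⟨m, hm⟩ := by
        apply aut_fix n ((revIso n).comp φ) (by omega)
        apply Fin.ext
        show ((revIso n) (φ ⟨0, by omega⟩)).val = 0
        rw [revIso_apply, Fin.val_rev]
        omega
      have := hψ x.val x.isLt
      have h2 : (revIso n) (φ x) = x := by simpa using this
      have := congrArg Fin.rev h2
      rw [revIso_apply] at this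
      rwa [Fin.rev_rev] at this

lemma orb_eq (n : ℕ) (x : Fin n) : orb (pathGraph n) x = {x, x.rev} := by
  ext y
  constructor
  · rintro ⟨φ, rfl⟩
    exact aut_apply φ x
  · rintro (rfl | rfl)
    · exact ⟨RelIso.refl _, rfl⟩
    · exact ⟨revIso n, revIso_apply x⟩

/-- abbreviation for the concrete orbit -/
def O {n : ℕ} (x : Fin n) : Set (Fin n) := {x, x.rev}

lemma orb_eq' (n : ℕ) (x : Fin n) : orb (pathGraph n) x = O x := orb_eq n x

lemma mem_O {n : ℕ} {x y : Fin n} : y ∈ O x ↔ y = x ∨ y = x.rev := Iff.rfl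

lemma O_eq_of_mem {n : ℕ} {x y : Fin n} (h : y ∈ O x) : O y = O x := by
  rcases h with rfl | rfl
  · rfl
  · show ({x.rev, x.rev.rev} : Set (Fin n)) = {x, x.rev}
    rw [Fin.rev_rev, Set.pair_comm]

lemma O_eq_of_inter {n : ℕ} {x y z : Fin n} (hx : z ∈ O x) (hy : z ∈ O y) :
    O x = O y := by
  rw [← O_eq_of_mem hx, ← O_eq_of_mem hy]

lemma indis_univ {n : ℕ} {x y : Fin n} :
    Indis (pathGraph n) Set.univ x y ↔ O x = O y := by
  unfold Indis
  rw [Set.inter_univ, Set.inter_univ, orb_eq', orb_eq']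

lemma indis_compl {n : ℕ} {S : Set (Fin n)} {x y : Fin n} :
    Indis (pathGraph n) Sᶜ x y ↔ O x ∩ Sᶜ = O y ∩ Sᶜ := by
  unfold Indis
  rw [orb_eq', orb_eq']

lemma gamma_iff {n : ℕ} (S : Set (Fin n)) :
    (∀ x y : Fin n, Indis (pathGraph n) Sᶜ x y ↔ Indis (pathGraph n) Set.univ x y) ↔
    ¬ ∃ x y : Fin n, O x ≠ O y ∧ O x ⊆ S ∧ O y ⊆ S := by
  constructor
  · rintro h ⟨x, y, hne, hx, hy⟩
    apply hne
    rw [← indis_univ, ← h, indis_compl]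
    have hx' : O x ∩ Sᶜ = ∅ := by
      rw [Set.eq_empty_iff_forall_notMem]; intro z hz; exact hz.2 (hx hz.1)
    have hy' : O y ∩ Sᶜ = ∅ := by
      rw [Set.eq_empty_iff_forall_notMem]; intro z hz; exact hz.2 (hy hz.1)
    rw [hx', hy']
  · intro h x y
    rw [indis_compl, indis_univ]
    constructor
    · intro hxy
      by_cases hx : O x ⊆ S
      · by_cases hy : O y ⊆ S
        · by_contra hne
          exact h ⟨x, y, hne, hx, hy⟩
        · obtain ⟨z, hz, hzs⟩ := Set.not_subset.mp hy
          have : z ∈ O x ∩ Sᶜ := hxy ▸ ⟨hz, hzs⟩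
          exact O_eq_of_inter this.1 hz
      · obtain ⟨z, hz, hzs⟩ := Set.not_subset.mp hx
        have : z ∈ O y ∩ Sᶜ := hxy ▸ ⟨hz, hzs⟩
        exact O_eq_of_inter hz this.1
    · intro hxy
      rw [hxy]

lemma mem_O_self {n : ℕ} (x : Fin n) : x ∈ O x := Or.inl rfl

lemma ess_iff {n : ℕ} (S : Set (Fin n)) :
    Essential (pathGraph n) S ↔
    S ⊂ Set.univ ∧ ∃ x y : Fin n, O x ≠ O y ∧ S = O x ∪ O y := by
  constructor
  · rintro ⟨h1, h2, h3⟩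
    refine ⟨h1, ?_⟩
    rw [gamma_iff, not_not] at h2
    obtain ⟨x, y, hne, hx, hy⟩ := h2
    refine ⟨x, y, hne, ?_⟩
    have hsub : O x ∪ O y ⊆ S := Set.union_subset hx hy
    by_contra hS
    have hQ : O x ∪ O y ⊂ S := ⟨hsub, fun hc => hS (Set.Subset.antisymm hsub hc).symm⟩
    have := (gamma_iff (O x ∪ O y)).mp (h3 _ hQ)
    exact this ⟨x, y, hne, Set.subset_union_left, Set.subset_union_right⟩
  · rintro ⟨h1, x, y, hne, rfl⟩
    refine ⟨h1, ?_, ?_⟩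
    · rw [gamma_iff, not_not]
      exact ⟨x, y, hne, Set.subset_union_left, Set.subset_union_right⟩
    · intro Q hQ
      rw [gamma_iff]
      rintro ⟨a, b, hab, ha, hb⟩
      -- O a and O b are among O x, O y
      have key : ∀ c : Fin n, O c ⊆ Q → O c = O x ∨ O c = O y := by
        intro c hc
        have : c ∈ O x ∪ O y := hQ.1 (hc (mem_O_self c))
        rcases this with h | h
        · exact Or.inl (O_eq_of_mem h)
        · exact Or.inr (O_eq_of_mem h)
      have hxy : O x ⊆ Q ∧ O y ⊆ Q := by
        rcases key a ha with h | h <;> rcases key b hb with h' | h'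
        · exact absurd (h.trans h'.symm) hab
        · exact ⟨h ▸ ha, h' ▸ hb⟩
        · exact ⟨h' ▸ hb, h ▸ ha⟩
        · exact absurd (h.trans h'.symm) hab
      exact hQ.2 (Set.union_subset hxy.1 hxy.2)

lemma mem_O_val {n : ℕ} {x z : Fin n} : z ∈ O x ↔ z.val = x.val ∨ z.val = n - 1 - x.val := by
  show z = x ∨ z = x.rev ↔ _
  rw [Fin.ext_iff, Fin.ext_iff, Fin.val_rev]
  constructor <;> (rintro (h|h)) <;> [left; right; left; right] <;> omega

lemma O_ne_iff {n : ℕ} {x y : Fin n} : O x ≠ O y ↔ y.val ≠ x.val ∧ y.val ≠ n - 1 - x.val := by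
  constructor
  · intro h
    constructor <;> intro hv <;> apply h
    · have : y ∈ O x := mem_O_val.mpr (Or.inl hv)
      rcases this with rfl | rfl
      · rfl
      · show ({x, x.rev} : Set _) = {x.rev, x.rev.rev}
        rw [Fin.rev_rev, Set.pair_comm]
    · have : y ∈ O x := mem_O_val.mpr (Or.inr hv)
      rcases this with rfl | rfl
      · rfl
      · show ({x, x.rev} : Set _) = {x.rev, x.rev.rev}
        rw [Fin.rev_rev, Set.pair_comm]
  · rintro ⟨h1, h2⟩ he
    have : y ∈ O x := he ▸ Or.inl rfl
    rw [mem_O_val] at this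
    tauto

-- part (i): n ≤ 4
lemma part_i (n : ℕ) (hn : n ≤ 4) :
    {S : Set (Fin n) | Essential (pathGraph n) S} = ∅ := by
  rw [Set.eq_empty_iff_forall_notMem]
  intro S hS
  rw [Set.mem_setOf_eq, ess_iff] at hS
  obtain ⟨hproper, x, y, hne, rfl⟩ := hS
  apply hproper.2
  intro z _
  rw [O_ne_iff] at hne
  have hx := x.isLt; have hy := y.isLt; have hz := z.isLt
  have : z.val = x.val ∨ z.val = n - 1 - x.val ∨ z.val = y.val ∨ z.val = n - 1 - y.val := by
    omega
  rcases this with h | h | h | h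
  · exact Or.inl (mem_O_val.mpr (Or.inl h))
  · exact Or.inl (mem_O_val.mpr (Or.inr h))
  · exact Or.inr (mem_O_val.mpr (Or.inl h))
  · exact Or.inr (mem_O_val.mpr (Or.inr h))

lemma ncard3 {α : Type*} [Finite α] {a b c : α} (h1 : a ≠ b) (h2 : a ≠ c) (h3 : b ≠ c) :
    ({a, b, c} : Set α).ncard = 3 := by
  rw [Set.ncard_insert_of_notMem (by simp [h1, h2]), Set.ncard_pair h3]

lemma ncard4 {α : Type*} [Finite α] {a b c d : α} (h1 : a ≠ b) (h2 : a ≠ c) (h3 : a ≠ d)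
    (h4 : b ≠ c) (h5 : b ≠ d) (h6 : c ≠ d) : ({a, b, c, d} : Set α).ncard = 4 := by
  rw [Set.ncard_insert_of_notMem (by simp [h1, h2, h3]), ncard3 h4 h5 h6]

/-- essential sets as unions: explicit description -/
lemma ess_set_explicit {n : ℕ} {x y : Fin n} :
    O x ∪ O y = {x, x.rev, y, y.rev} := by
  show ({x, x.rev} : Set (Fin n)) ∪ {y, y.rev} = _
  rw [Set.insert_union, Set.singleton_union]

def gOdd (k : ℕ) (m : ℕ) : Set (Fin (2 * k + 1)) :=
  {z | z.val = m ∨ z.val = 2 * k - m ∨ z.val = k}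

lemma mem_gOdd {k m : ℕ} {z : Fin (2 * k + 1)} :
    z ∈ gOdd k m ↔ z.val = m ∨ z.val = 2 * k - m ∨ z.val = k := Iff.rfl

lemma part_ii_odd (k : ℕ) (hk : 2 ≤ k) :
    {S : Set (Fin (2 * k + 1)) |
      Essential (pathGraph (2 * k + 1)) S ∧ S.ncard = 3}.ncard = k := by
  have hset : {S : Set (Fin (2 * k + 1)) |
      Essential (pathGraph (2 * k + 1)) S ∧ S.ncard = 3}
      = gOdd k '' ↑(Finset.range k) := by
    ext S
    simp only [Set.mem_setOf_eq, Set.mem_image, Finset.coe_range, Set.mem_Iio]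
    constructor
    · rintro ⟨hE, hc⟩
      rw [ess_iff] at hE
      obtain ⟨hproper, x, y, hne, rfl⟩ := hE
      rw [O_ne_iff] at hne
      have hx := x.isLt; have hy := y.isLt
      -- exactly one of x, y is the middle vertex k
      have hmid : (x.val = k ∧ y.val ≠ k) ∨ (y.val = k ∧ x.val ≠ k) := by
        by_contra hcon
        push_neg at hcon
        have hxk : x.val ≠ k := by omega
        have hyk : y.val ≠ k := by omega
        rw [ess_set_explicit] at hc
        have hrx := Fin.val_rev x
        have hry := Fin.val_rev y
        rw [ncard4 ?_ ?_ ?_ ?_ ?_ ?_] at hc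
        · omega
        all_goals (simp only [Ne, Fin.ext_iff]; omega)
      rcases hmid with ⟨hxk, hyk⟩ | ⟨hyk, hxk⟩
      · refine ⟨min y.val (2 * k - y.val), by omega, ?_⟩
        ext z
        have hz := z.isLt
        rw [Set.mem_union, mem_O_val, mem_O_val, mem_gOdd]
        omega
      · refine ⟨min x.val (2 * k - x.val), by omega, ?_⟩
        ext z
        have hz := z.isLt
        rw [Set.mem_union, mem_O_val, mem_O_val, mem_gOdd]
        omega
    · rintro ⟨m, hm, rfl⟩
      have h1 : (⟨m, by omega⟩ : Fin (2 * k + 1)).val = m := rfl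
      constructor
      · rw [ess_iff]
        refine ⟨?_, ⟨m, by omega⟩, ⟨k, by omega⟩, ?_, ?_⟩
        · rw [Set.ssubset_univ_iff]
          intro hu
          have : (⟨if m = 0 then 1 else 0, by split_ifs <;> omega⟩ : Fin (2 * k + 1)) ∈ gOdd k m := by
            rw [hu]; trivial
          have h2 : (if m = 0 then 1 else 0) = m ∨ (if m = 0 then 1 else 0) = 2 * k - m
              ∨ (if m = 0 then 1 else 0) = k := this
          split_ifs at h2 <;> omega
        · rw [O_ne_iff]
          simp only [Fin.val_mk]
          omega
        · ext z
          have hz := z.isLt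
          rw [Set.mem_union, mem_O_val, mem_O_val, mem_gOdd]
          simp only [Fin.val_mk]
          omega
      · have : gOdd k m = {(⟨m, by omega⟩ : Fin (2 * k + 1)), ⟨2 * k - m, by omega⟩,
            ⟨k, by omega⟩} := by
          ext z
          have hz := z.isLt
          rw [mem_gOdd]
          simp only [Set.mem_insert_iff, Set.mem_singleton_iff, Fin.ext_iff, Fin.val_mk]
          try omega
        rw [this]
        refine ncard3 ?_ ?_ ?_ <;> intro hq <;> rw [Fin.mk.injEq] at hq <;> omega
  rw [hset, Set.ncard_image_of_injOn, Set.ncard_coe_finset, Finset.card_range]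
  intro a ha b hb hab
  simp only [Finset.coe_range, Set.mem_Iio] at ha hb
  have : (⟨a, by omega⟩ : Fin (2 * k + 1)) ∈ gOdd k b := by
    rw [← hab]; exact mem_gOdd.mpr (Or.inl rfl)
  rw [mem_gOdd] at this
  simp only [Fin.val_mk] at this
  omega

lemma even_ncard {k : ℕ} {S : Set (Fin (2 * k))}
    (hE : Essential (pathGraph (2 * k)) S) : S.ncard = 4 := by
  rw [ess_iff] at hE
  obtain ⟨-, x, y, hne, rfl⟩ := hE
  rw [O_ne_iff] at hne
  have hx := x.isLt; have hy := y.isLt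
  have hrx := Fin.val_rev x
  have hry := Fin.val_rev y
  rw [ess_set_explicit]
  refine ncard4 ?_ ?_ ?_ ?_ ?_ ?_ <;> (simp only [Ne, Fin.ext_iff]; omega)

lemma part_ii_even (k : ℕ) :
    {S : Set (Fin (2 * k)) |
      Essential (pathGraph (2 * k)) S ∧ S.ncard = 3} = ∅ := by
  rw [Set.eq_empty_iff_forall_notMem]
  rintro S ⟨hE, hc⟩
  rw [even_ncard hE] at hc
  omega

def gEven (k : ℕ) (s : Finset ℕ) : Set (Fin (2 * k)) :=
  {z | z.val ∈ s ∨ 2 * k - 1 - z.val ∈ s}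

lemma mem_gEven {k : ℕ} {s : Finset ℕ} {z : Fin (2 * k)} :
    z ∈ gEven k s ↔ z.val ∈ s ∨ 2 * k - 1 - z.val ∈ s := Iff.rfl

lemma part_iii (k : ℕ) (hk : 3 ≤ k) :
    {S : Set (Fin (2 * k)) |
      Essential (pathGraph (2 * k)) S ∧ S.ncard = 4}.ncard = k * (k - 1) / 2 := by
  have hset : {S : Set (Fin (2 * k)) | Essential (pathGraph (2 * k)) S ∧ S.ncard = 4}
      = gEven k '' ↑(Finset.powersetCard 2 (Finset.range k)) := by
    ext S
    simp only [Set.mem_setOf_eq, Set.mem_image, Finset.mem_coe, Finset.mem_powersetCard]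
    constructor
    · rintro ⟨hE, -⟩
      rw [ess_iff] at hE
      obtain ⟨hproper, x, y, hne, rfl⟩ := hE
      rw [O_ne_iff] at hne
      have hx := x.isLt; have hy := y.isLt
      set a := min x.val (2 * k - 1 - x.val) with ha
      set b := min y.val (2 * k - 1 - y.val) with hb
      have hab : a ≠ b := by omega
      refine ⟨{a, b}, ⟨?_, ?_⟩, ?_⟩
      · rw [Finset.insert_subset_iff, Finset.singleton_subset_iff,
          Finset.mem_range, Finset.mem_range]
        omega
      · rw [Finset.card_insert_of_notMem (by simpa using hab), Finset.card_singleton]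
      · ext z
        have hz := z.isLt
        rw [mem_gEven, Set.mem_union, mem_O_val, mem_O_val]
        simp only [Finset.mem_insert, Finset.mem_singleton]
        omega
    · rintro ⟨s, ⟨hsub, hcard⟩, rfl⟩
      obtain ⟨a, b, hab, rfl⟩ := Finset.card_eq_two.mp hcard
      have hak : a < k := by
        simpa using hsub (Finset.mem_insert_self a {b})
      have hbk : b < k := by
        simpa using hsub (Finset.mem_insert_of_mem (Finset.mem_singleton_self b))
      constructor
      · rw [ess_iff]
        refine ⟨?_, ⟨a, by omega⟩, ⟨b, by omega⟩, ?_, ?_⟩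
        · rw [Set.ssubset_univ_iff]
          intro hu
          set c := if a = 0 then (if b = 1 then 2 else 1)
            else (if b = 0 then (if a = 1 then 2 else 1) else 0) with hc
          have hck : c < k ∧ c ≠ a ∧ c ≠ b := by
            rw [hc]; split_ifs <;> omega
          have : (⟨c, by omega⟩ : Fin (2 * k)) ∈ gEven k {a, b} := by
            rw [hu]; trivial
          rw [mem_gEven] at this
          simp only [Fin.val_mk, Finset.mem_insert, Finset.mem_singleton] at this
          omega
        · rw [O_ne_iff]
          simp only [Fin.val_mk]
          omega
        · ext z
          have hz := z.isLt
          rw [Set.mem_union, mem_O_val, mem_O_val, mem_gEven]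
          simp only [Fin.val_mk, Finset.mem_insert, Finset.mem_singleton]
          omega
      · have : gEven k {a, b} = {(⟨a, by omega⟩ : Fin (2 * k)), ⟨2 * k - 1 - a, by omega⟩,
            ⟨b, by omega⟩, ⟨2 * k - 1 - b, by omega⟩} := by
          ext z
          have hz := z.isLt
          rw [mem_gEven]
          simp only [Finset.mem_insert, Finset.mem_singleton, Set.mem_insert_iff,
            Set.mem_singleton_iff, Fin.ext_iff, Fin.val_mk]
          omega
        rw [this]
        refine ncard4 ?_ ?_ ?_ ?_ ?_ ?_ <;> intro hq <;> rw [Fin.mk.injEq] at hq <;> omega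
  rw [hset, Set.ncard_image_of_injOn, Set.ncard_coe_finset, Finset.card_powersetCard,
    Finset.card_range, Nat.choose_two_right]
  intro s hs t ht hst
  simp only [Finset.mem_coe, Finset.mem_powersetCard] at hs ht
  have key : ∀ (u v : Finset ℕ), u ⊆ Finset.range k → v ⊆ Finset.range k →
      gEven k u = gEven k v → ∀ m ∈ u, m ∈ v := by
    intro u v hu hv huv m hm
    have hmk : m < k := by simpa using hu hm
    have : (⟨m, by omega⟩ : Fin (2 * k)) ∈ gEven k v := by
      rw [← huv, mem_gEven]
      exact Or.inl hm
    rw [mem_gEven] at this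
    simp only [Fin.val_mk] at this
    rcases this with h | h
    · exact h
    · exfalso
      have := hv h
      simp only [Finset.mem_range] at this
      omega
  exact Finset.Subset.antisymm (fun m hm => key s t hs.1 ht.1 hst m hm)
    (fun m hm => key t s ht.1 hs.1 hst.symm m hm)

/-- for the path graph `P_n`:
(i) `ESS(P_n) = ∅` for `n ≤ 4`;
(ii) for `k ≥ 2`, `|ESS_3(P_{2k+1})| = k` and `ESS_3(P_{2k}) = ∅`;
(iii) for `k ≥ 3`, `|ESS_4(P_{2k})| = k(k-1)/2`. -/
theorem stmt_18 :
    (∀ n : ℕ, n ≤ 4 →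
      {S : Set (Fin n) | Essential (SimpleGraph.pathGraph n) S} = ∅) ∧
    (∀ k : ℕ, 2 ≤ k →
      {S : Set (Fin (2 * k + 1)) |
        Essential (SimpleGraph.pathGraph (2 * k + 1)) S ∧ S.ncard = 3}.ncard = k ∧
      {S : Set (Fin (2 * k)) |
        Essential (SimpleGraph.pathGraph (2 * k)) S ∧ S.ncard = 3} = ∅) ∧
    (∀ k : ℕ, 3 ≤ k →
      {S : Set (Fin (2 * k)) |
        Essential (SimpleGraph.pathGraph (2 * k)) S ∧ S.ncard = 4}.ncard
        = k * (k - 1) / 2) := by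
  exact ⟨part_i, fun k hk => ⟨part_ii_odd k hk, part_ii_even k⟩, part_iii⟩
end
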